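/- Let G be a connected finite simple graph, U ⊆ V(G), and F a finite simple graph. Let ρ : G_U → G be the projection (v,S) ↦ v, and for ψ ∈ Hom(F,G) let hom_ψ(F,G_U) be the number of homomorphisms φ from F to G_U with ρ ∘ φ = ψ. Then hom_ψ(F,G_∅) > 0 for every ψ, and hom(F,G_U) ≤ hom(F,G_∅). -/

import Mathlib

/-!
Taking symmetric differences of edge sets vertexwise turns two homomorphisms `F → G_U` with
the same projection `ψ` into a homomorphism `F → G_∅` over `ψ`: the parities cancel, and an
edge missing from both `S △ T` and `S₀ △ T₀` is missing from their symmetric difference.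
Either homomorphism is recovered from the other and the difference, so fixing one lift of
each `ψ` injects `Hom(F, G_U)` into `Hom(F, G_∅)`. Every `ψ` lifts to `G_∅` with all edge
sets empty.
-/

open SimpleGraph

variable {V : Type}

/-- Vertices of the parity construction `G_U`: pairs `(v, S)` with `S` a set of edges
incident to `v` whose cardinality has the parity of `|{v} ∩ U|`. -/
def ParityVert (G : SimpleGraph V) (U : Set V) : Type :=
  {p : V × Set (Sym2 V) //
    p.2 ⊆ G.incidenceSet p.1 ∧ p.2.ncard % 2 = ({p.1} ∩ U : Set V).ncard % 2}

/-- The parity construction `G_U`: `(v,S)` is adjacent to `(u,T)` iff `uv ∈ E(G)` and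
`uv ∉ S △ T`. -/
def parityGraph (G : SimpleGraph V) (U : Set V) : SimpleGraph (ParityVert G U) where
  Adj x y := G.Adj x.1.1 y.1.1 ∧ s(x.1.1, y.1.1) ∉ symmDiff x.1.2 y.1.2
  symm := by
    constructor
    rintro x y ⟨h1, h2⟩
    exact ⟨h1.symm, by rw [Sym2.eq_swap, symmDiff_comm]; exact h2⟩
  loopless := ⟨fun x h => G.loopless.irrefl _ h.1⟩

open scoped symmDiff

theorem Set.ncard_symmDiff_add_two_mul_ncard_inter {X : Type*} (s t : Set X)
    (hs : s.Finite := by toFinite_tac) (ht : t.Finite := by toFinite_tac) :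
    (s ∆ t).ncard + 2 * (s ∩ t).ncard = s.ncard + t.ncard := by
  have hsdiff : ((s ∪ t) \ (s ∩ t)).ncard + (s ∩ t).ncard = (s ∪ t).ncard :=
    Set.ncard_sdiff_add_ncard_of_subset inf_le_sup (hs.union ht)
  have hunion := Set.ncard_union_add_ncard_inter s t hs ht
  rw [symmDiff_eq_sup_sdiff_inf]
  change ((s ∪ t) \ (s ∩ t)).ncard + _ = _
  omega

namespace ParityVert

variable {G : SimpleGraph V} {U : Set V}

instance [Finite V] : Finite (ParityVert G U) := by
  unfold ParityVert; infer_instance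

def empty (G : SimpleGraph V) (v : V) : ParityVert G ∅ :=
  ⟨(v, ∅), Set.empty_subset _, by simp⟩

def diff [Finite V] (x y : ParityVert G U) (h : y.1.1 = x.1.1) : ParityVert G ∅ :=
  ⟨(x.1.1, x.1.2 ∆ y.1.2), by
    refine ⟨symmDiff_le_sup.trans (sup_le x.2.1 (h ▸ y.2.1)), ?_⟩
    have hx := x.2.2
    have hy := y.2.2
    have hcard := Set.ncard_symmDiff_add_two_mul_ncard_inter x.1.2 y.1.2
    rw [h] at hy
    simp only [Set.inter_empty, Set.ncard_empty]
    omega⟩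

theorem diff_adj_diff [Finite V] {x x₀ y y₀ : ParityVert G U} (hx : x₀.1.1 = x.1.1)
    (hy : y₀.1.1 = y.1.1) (hxy : (parityGraph G U).Adj x y)
    (hxy₀ : (parityGraph G U).Adj x₀ y₀) :
    (parityGraph G ∅).Adj (x.diff x₀ hx) (y.diff y₀ hy) := by
  refine ⟨hxy.1, ?_⟩
  have h₀ : s(x.1.1, y.1.1) ∉ x₀.1.2 ∆ y₀.1.2 := hx ▸ hy ▸ hxy₀.2
  change s(x.1.1, y.1.1) ∉ x.1.2 ∆ x₀.1.2 ∆ (y.1.2 ∆ y₀.1.2)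
  rw [symmDiff_symmDiff_symmDiff_comm]
  simp [Set.mem_symmDiff, hxy.2, h₀]

end ParityVert

namespace parityGraph

variable {α : Type*} {G : SimpleGraph V} {U : Set V} {F : SimpleGraph α}

variable (G U) in
def proj : parityGraph G U →g G where
  toFun x := x.1.1
  map_rel' h := h.1

def emptyLift (ψ : F →g G) : F →g parityGraph G ∅ where
  toFun a := ParityVert.empty G (ψ a)
  map_rel' h := ⟨ψ.map_rel h, by simp [ParityVert.empty]⟩

def diffHom [Finite V] (φ φ₀ : F →g parityGraph G U)
    (h : (proj G U).comp φ₀ = (proj G U).comp φ) : F →g parityGraph G ∅ where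
  toFun a := (φ a).diff (φ₀ a) (DFunLike.congr_fun h a)
  map_rel' hab := ParityVert.diff_adj_diff _ _ (φ.map_rel hab) (φ₀.map_rel hab)

theorem proj_comp_diffHom [Finite V] (φ φ₀ : F →g parityGraph G U)
    (h : (proj G U).comp φ₀ = (proj G U).comp φ) :
    (proj G ∅).comp (diffHom φ φ₀ h) = (proj G U).comp φ :=
  rfl

theorem eq_of_diffHom_eq [Finite V] {φ φ' φ₀ φ₀' : F →g parityGraph G U}
    {h : (proj G U).comp φ₀ = (proj G U).comp φ}
    {h' : (proj G U).comp φ₀' = (proj G U).comp φ'}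
    (hφ₀ : φ₀ = φ₀') (heq : diffHom φ φ₀ h = diffHom φ' φ₀' h') : φ = φ' := by
  subst hφ₀
  ext a : 1
  have hv : (φ a).1.1 = (φ' a).1.1 :=
    congrArg (fun χ : F →g parityGraph G ∅ => (χ a).1.1) heq
  have hS : (φ a).1.2 ∆ (φ₀ a).1.2 = (φ' a).1.2 ∆ (φ₀ a).1.2 :=
    congrArg (fun χ : F →g parityGraph G ∅ => (χ a).1.2) heq
  exact Subtype.ext (Prod.ext hv (symmDiff_left_injective _ hS))

variable (G U F) in
theorem card_hom_le_card_hom_empty [Finite V] [Finite α] :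
    Nat.card (F →g parityGraph G U) ≤ Nat.card (F →g parityGraph G ∅) := by
  cases isEmpty_or_nonempty (F →g parityGraph G U)
  · simp
  set lift := Function.invFun fun φ : F →g parityGraph G U => (proj G U).comp φ
  have hlift (φ : F →g parityGraph G U) : (proj G U).comp (lift ((proj G U).comp φ)) =
      (proj G U).comp φ := Function.invFun_eq ⟨φ, rfl⟩
  refine Nat.card_le_card_of_injective (fun φ => diffHom φ _ (hlift φ)) fun φ φ' heq => ?_
  have hproj : (proj G U).comp φ = (proj G U).comp φ' := by
    simpa only [proj_comp_diffHom] using congrArg (proj G ∅).comp heq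
  exact eq_of_diffHom_eq (congrArg lift hproj) heq

end parityGraph

theorem parityGraph_hom_counts_general [Fintype V] {α : Type} [Fintype α]
    (G : SimpleGraph V) (U : Set V) (F : SimpleGraph α) :
    (∀ ψ : F →g G,
      0 < Nat.card {φ : F →g parityGraph G (∅ : Set V) // ∀ a, (φ a).1.1 = ψ a}) ∧
    Nat.card (F →g parityGraph G U) ≤ Nat.card (F →g parityGraph G (∅ : Set V)) :=
  ⟨fun ψ => Nat.card_pos_iff.2
      ⟨⟨⟨parityGraph.emptyLift ψ, fun _ => rfl⟩⟩, inferInstance⟩,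
    parityGraph.card_hom_le_card_hom_empty G U F⟩

/-- Let `G` be a connected finite simple graph, `U ⊆ V(G)`, `F` a finite
simple graph, and `ρ : G_U → G` the projection `(v,S) ↦ v`.  For every homomorphism
`ψ : F → G` the number `hom_ψ(F, G_∅)` of homomorphisms `φ : F → G_∅` with `ρ ∘ φ = ψ`
is positive, and `hom(F, G_U) ≤ hom(F, G_∅)`. -/
theorem parityGraph_hom_counts [Fintype V] {α : Type} [Fintype α]
    (G : SimpleGraph V) (hG : G.Connected) (U : Set V) (F : SimpleGraph α) :
    (∀ ψ : F →g G,
      0 < Nat.card {φ : F →g parityGraph G (∅ : Set V) // ∀ a, (φ a).1.1 = ψ a}) ∧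
    Nat.card (F →g parityGraph G U) ≤ Nat.card (F →g parityGraph G (∅ : Set V)) :=
  parityGraph_hom_counts_general G U F
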